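/- arXiv:1810.11669 — 3 statements merged into one kernel-verified Lean document; each statement's English description precedes it below -/
import Mathlib

section
/- Let G be a strongly connected simple digraph on n ≥ 2 vertices and α ∈ [0,1). Then 1 ≤ λ_α(G) ≤ n−1; moreover λ_α(G) = n−1 if and only if G is the complete digraph on n vertices, and λ_α(G) = 1 if and only if G is the directed cycle on n vertices. -/
open scoped Classical
open Matrix

/-- Spectral radius: largest modulus of (complex) eigenvalues, i.e. roots of the
characteristic polynomial of the complexified matrix. -/
noncomputable def specRad {m : Type*} [Fintype m] [DecidableEq m] (M : Matrix m m ℝ) : ℝ :=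
  sSup {r : ℝ | ∃ μ : ℂ, (M.map Complex.ofReal).charpoly.IsRoot μ ∧ r = ‖μ‖}

/-- Irreducibility of a matrix: the associated digraph is strongly connected. -/
def Irred {n : ℕ} (M : Matrix (Fin n) (Fin n) ℝ) : Prop :=
  ∀ i j : Fin n, Relation.ReflTransGen (fun a b => M a b ≠ 0) i j

/-- Outdegree of a vertex in a digraph on `Fin n`. -/
noncomputable def outdeg {n : ℕ} (G : Fin n → Fin n → Prop) (i : Fin n) : ℕ :=
  (Finset.univ.filter (fun j => G i j)).card

/-- Indegree of a vertex. -/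
noncomputable def indeg {n : ℕ} (G : Fin n → Fin n → Prop) (i : Fin n) : ℕ :=
  (Finset.univ.filter (fun j => G j i)).card

/-- The matrix `A_α(G) = α D(G) + (1-α) A(G)`. -/
noncomputable def Aalpha {n : ℕ} (α : ℝ) (G : Fin n → Fin n → Prop) :
    Matrix (Fin n) (Fin n) ℝ :=
  α • Matrix.diagonal (fun i => (outdeg G i : ℝ)) +
    (1 - α) • (Matrix.of fun i j => if G i j then (1 : ℝ) else 0)

/-- The `A_α` spectral radius of a digraph. -/
noncomputable def lamAlpha {n : ℕ} (α : ℝ) (G : Fin n → Fin n → Prop) : ℝ :=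
  specRad (Aalpha α G)

/-- Strong connectivity of a digraph. -/
def SConn {n : ℕ} (G : Fin n → Fin n → Prop) : Prop :=
  ∀ u v : Fin n, Relation.ReflTransGen G u v

/-- Isomorphism of digraphs on `Fin n`. -/
def DIso {n : ℕ} (G H : Fin n → Fin n → Prop) : Prop :=
  ∃ e : Equiv.Perm (Fin n), ∀ u v, G u v ↔ H (e u) (e v)

/-- The directed cycle on `Fin n`. -/
def dirCycle (n : ℕ) : Fin n → Fin n → Prop :=
  fun i j => j.val = (i.val + 1) % n


/-- Deleting a set of vertices from a digraph. -/
def delVerts {n : ℕ} (G : Fin n → Fin n → Prop) (S : Finset (Fin n)) :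
    Fin n → Fin n → Prop :=
  fun a b => G a b ∧ a ∉ S ∧ b ∉ S

/-- The digraph obtained by deleting the vertices of `S` is strongly connected. -/
def SConnAvoid {n : ℕ} (G : Fin n → Fin n → Prop) (S : Finset (Fin n)) : Prop :=
  ∀ u v : Fin n, u ∉ S → v ∉ S → Relation.ReflTransGen (delVerts G S) u v

/-- The vertex connectivity of `G` equals `k`. -/
def vertexConnIs {n : ℕ} (G : Fin n → Fin n → Prop) (k : ℕ) : Prop :=
  (∃ S : Finset (Fin n), S.card = k ∧ ¬ SConnAvoid G S) ∧
    ∀ S : Finset (Fin n), ¬ SConnAvoid G S → k ≤ S.card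

/-- Deleting a set of arcs from a digraph. -/
def delArcs {n : ℕ} (G : Fin n → Fin n → Prop) (S : Finset (Fin n × Fin n)) :
    Fin n → Fin n → Prop :=
  fun a b => G a b ∧ (a, b) ∉ S

/-- The arc connectivity of `G` equals `k`. -/
def arcConnIs {n : ℕ} (G : Fin n → Fin n → Prop) (k : ℕ) : Prop :=
  (∃ S : Finset (Fin n × Fin n), S.card = k ∧ ¬ SConn (delArcs G S)) ∧
    ∀ S : Finset (Fin n × Fin n), ¬ SConn (delArcs G S) → k ≤ S.card

/-- `G` contains a directed cycle of length `g`. -/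
def hasCycleLen {n : ℕ} (G : Fin n → Fin n → Prop) (g : ℕ) : Prop :=
  ∃ c : Fin g → Fin n, Function.Injective c ∧
    ∀ i : Fin g, G (c i) (c ⟨(i.val + 1) % g, Nat.mod_lt _ i.pos⟩)

/-- The girth of `G` equals `g`. -/
def girthIs {n : ℕ} (G : Fin n → Fin n → Prop) (g : ℕ) : Prop :=
  hasCycleLen G g ∧ ∀ m, 0 < m → m < g → ¬ hasCycleLen G m

/-- The clique number of `G` equals `d`. -/
def cliqueNumIs {n : ℕ} (G : Fin n → Fin n → Prop) (d : ℕ) : Prop :=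
  (∃ S : Finset (Fin n), S.card = d ∧ ∀ u ∈ S, ∀ v ∈ S, u ≠ v → G u v ∧ G v u) ∧
    ∀ S : Finset (Fin n), (∀ u ∈ S, ∀ v ∈ S, u ≠ v → G u v ∧ G v u) → S.card ≤ d

/-- The digraph `C_{n,g}`: the directed cycle `v_1 … v_g v_1` (indices `0,…,g-1`)
together with the directed path `v_g v_{g+1} … v_n v_1`. -/
def Cng (n g : ℕ) : Fin n → Fin n → Prop := fun i j =>
  j.val = i.val + 1 ∨ (i.val = g - 1 ∧ j.val = 0) ∨ (i.val = n - 1 ∧ j.val = 0)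

/-- `C'_{n,g} = C_{n,g} - {(v_n, v_1)} + {(v_n, v_g)}`. -/
def Cng' (n g : ℕ) : Fin n → Fin n → Prop := fun i j =>
  j.val = i.val + 1 ∨ (i.val = g - 1 ∧ j.val = 0) ∨ (i.val = n - 1 ∧ j.val = g - 1)

/-- The digraph `B_{n,d}`: a complete digraph on the `d` vertices
`{0} ∪ {n-d+1, …, n-1}` together with the directed path `v_1 v_2 … v_{n-d+2}`
(indices `0, 1, …, n-d+1`). -/
def Bnd (n d : ℕ) : Fin n → Fin n → Prop := fun i j =>
  (j.val = i.val + 1 ∧ j.val ≤ n - d + 1) ∨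
    (i ≠ j ∧ (i.val = 0 ∨ n - d + 1 ≤ i.val) ∧ (j.val = 0 ∨ n - d + 1 ≤ j.val))

/-- `B'_{n,d} = B_{n,d} - {(v_{n-d+1}, v_{n-d+2})} + {(v_{n-d+1}, v_1)}`. -/
def Bnd' (n d : ℕ) : Fin n → Fin n → Prop := fun i j =>
  (j.val = i.val + 1 ∧ j.val ≤ n - d) ∨ (i.val = n - d ∧ j.val = 0) ∨
    (i ≠ j ∧ (i.val = 0 ∨ n - d + 1 ≤ i.val) ∧ (j.val = 0 ∨ n - d + 1 ≤ j.val))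

/-- The digraph `K(n,k,m)`: parts `K_m` (indices `< m`), `K_k` (indices in `[m, m+k)`),
`K_{n-k-m}` (indices `≥ m+k`); all parts complete, `K_k` joined both ways to the others,
and all one-way arcs from `K_m` to `K_{n-k-m}`. -/
def Knkm (n k m : ℕ) : Fin n → Fin n → Prop := fun i j =>
  i ≠ j ∧ ¬(m + k ≤ i.val ∧ j.val < m)


/-!
The row sums of `A_α(G)` are the outdegrees, which lie between `1` (strong connectivity) and
`n - 1` (no loops). The spectral radius of a nonnegative matrix lies between its smallest and
largest row sum: it is at most the max-row-sum norm, and at least the smallest row sum by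
Gelfand's formula, because the row sums of `M ^ k` are at least `s ^ k`. If the matrix is
irreducible and its row sums are not all equal, then for some `N` all row sums of `M ^ N` lie
strictly below `S ^ N` (resp. above `s ^ N`), and `ρ(M ^ N) = ρ(M) ^ N` makes the bound strict.
So `λ_α(G) = n - 1` exactly when every outdegree is `n - 1`, and `λ_α(G) = 1` exactly when every
outdegree is `1`; a strongly connected digraph in which every vertex has a single out-neighbour
is the graph of a cyclic permutation, which is conjugate to `finRotate n`.
-/

open Filter

section SpectralRadius

variable {m : Type*} [Fintype m] [DecidableEq m] (M : Matrix m m ℝ)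

lemma map_ofReal_pow (k : ℕ) : (M ^ k).map Complex.ofReal = M.map Complex.ofReal ^ k :=
  Matrix.map_pow M Complex.ofRealHom k

lemma specRad_eq_sSup_norm_spectrum :
    specRad M = sSup ((‖·‖) '' spectrum ℂ (M.map Complex.ofReal)) := by
  rw [specRad]
  congr 1
  ext r
  simp [Matrix.mem_spectrum_iff_isRoot_charpoly, eq_comm]

lemma spectrum_eq_setOf_isRoot :
    spectrum ℂ (M.map Complex.ofReal) = {μ | (M.map Complex.ofReal).charpoly.IsRoot μ} :=
  Set.ext fun _ => Matrix.mem_spectrum_iff_isRoot_charpoly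

lemma finite_spectrum_map_ofReal : (spectrum ℂ (M.map Complex.ofReal)).Finite := by
  rw [spectrum_eq_setOf_isRoot]
  exact Polynomial.finite_setOfPred_isRoot (Matrix.charpoly_monic _).ne_zero

lemma specRad_nonneg : 0 ≤ specRad M := by
  rw [specRad_eq_sSup_norm_spectrum]
  exact Real.sSup_nonneg (by rintro _ ⟨μ, -, rfl⟩; exact norm_nonneg μ)

lemma norm_le_specRad {μ : ℂ} (hμ : μ ∈ spectrum ℂ (M.map Complex.ofReal)) :
    ‖μ‖ ≤ specRad M := by
  rw [specRad_eq_sSup_norm_spectrum]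
  exact le_csSup ((finite_spectrum_map_ofReal M).image _).bddAbove ⟨μ, hμ, rfl⟩

lemma exists_norm_eq_specRad [Nonempty m] :
    ∃ μ ∈ spectrum ℂ (M.map Complex.ofReal), ‖μ‖ = specRad M := by
  obtain ⟨μ, hμ, hmax⟩ := Set.exists_max_image _ (‖·‖) (finite_spectrum_map_ofReal M)
    (spectrum.nonempty_of_isAlgClosed_of_finiteDimensional ℂ (M.map Complex.ofReal))
  refine ⟨μ, hμ, ?_⟩
  rw [specRad_eq_sSup_norm_spectrum]
  exact (IsGreatest.csSup_eq ⟨Set.mem_image_of_mem _ hμ,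
    by rintro _ ⟨ν, hν, rfl⟩; exact hmax ν hν⟩).symm

lemma specRad_pow [Nonempty m] {N : ℕ} (hN : 0 < N) : specRad (M ^ N) = specRad M ^ N := by
  have hσ := spectrum.map_pow_of_pos (𝕜 := ℂ) (M.map Complex.ofReal) hN
  rw [← map_ofReal_pow] at hσ
  apply le_antisymm
  · obtain ⟨ν, hν, hνρ⟩ := exists_norm_eq_specRad (M ^ N)
    rw [hσ] at hν
    obtain ⟨μ, hμ, rfl⟩ := hν
    rw [← hνρ, norm_pow]
    exact pow_le_pow_left₀ (norm_nonneg μ) (norm_le_specRad M hμ) N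
  · obtain ⟨μ, hμ, hμρ⟩ := exists_norm_eq_specRad M
    rw [← hμρ, ← norm_pow]
    exact norm_le_specRad (M ^ N) (hσ ▸ ⟨μ, hμ, rfl⟩)

end SpectralRadius

section RowSums

variable {m : Type*} [Fintype m] [DecidableEq m]

/-- For `c = 1` (resp. `c = -1`) nonnegativity says that the row sums of `M ^ k` are at least
(resp. at most) `t ^ k`, so one argument serves both bounds. -/
def powRowSumDev (c t : ℝ) (M : Matrix m m ℝ) (k : ℕ) (i : m) : ℝ :=
  c * (∑ j, (M ^ k) i j - t ^ k)

variable {c t : ℝ} {M : Matrix m m ℝ}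

lemma powRowSumDev_add (a b : ℕ) (i : m) :
    powRowSumDev c t M (a + b) i =
      t ^ b * powRowSumDev c t M a i + ∑ l, (M ^ a) i l * powRowSumDev c t M b l := by
  simp only [powRowSumDev, pow_add, Matrix.mul_apply, mul_sub, Finset.mul_sum,
    Finset.sum_sub_distrib]
  rw [Finset.sum_comm]
  ring_nf

lemma powRowSumDev_nonneg (hM : ∀ i j, 0 ≤ M i j) (ht : 0 ≤ t)
    (h : ∀ i, 0 ≤ powRowSumDev c t M 1 i) (k : ℕ) (i : m) : 0 ≤ powRowSumDev c t M k i := by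
  induction k generalizing i with
  | zero => simp [powRowSumDev, Matrix.one_apply]
  | succ k ih =>
    rw [add_comm, powRowSumDev_add]
    exact add_nonneg (mul_nonneg (pow_nonneg ht k) (h i))
      (Finset.sum_nonneg fun l _ => mul_nonneg (by simpa using hM i l) (ih l))

lemma exists_powRowSumDev_pos (hM : ∀ i j, 0 ≤ M i j) (ht : 0 < t)
    (h : ∀ i, 0 ≤ powRowSumDev c t M 1 i) {k : m} (hk : 0 < powRowSumDev c t M 1 k)
    (hreach : ∀ i, ∃ ℓ, 0 < (M ^ ℓ) i k) :
    ∃ N, 0 < N ∧ ∀ i, 0 < powRowSumDev c t M N i := by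
  have hnonneg := powRowSumDev_nonneg hM ht.le h
  have hpos_k : ∀ d, 0 < powRowSumDev c t M (d + 1) k := fun d => by
    rw [add_comm, powRowSumDev_add]
    exact add_pos_of_pos_of_nonneg (mul_pos (pow_pos ht d) hk)
      (Finset.sum_nonneg fun l _ => mul_nonneg (by simpa using hM k l) (hnonneg d l))
  choose ℓ hℓ using hreach
  refine ⟨Finset.univ.sup ℓ + 1, Nat.succ_pos _, fun i => ?_⟩
  -- row `i` reaches row `k` in `ℓ i` steps, and the deviation at `k` stays strict afterwards
  have hℓi : ℓ i ≤ Finset.univ.sup ℓ := Finset.le_sup (Finset.mem_univ i)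
  rw [show Finset.univ.sup ℓ + 1 = ℓ i + (Finset.univ.sup ℓ - ℓ i + 1) by omega,
    powRowSumDev_add]
  refine add_pos_of_nonneg_of_pos (mul_nonneg (pow_nonneg ht.le _) (hnonneg _ i)) ?_
  exact Finset.sum_pos' (fun l _ => mul_nonneg (Matrix.pow_apply_nonneg hM _ i l) (hnonneg _ l))
    ⟨k, Finset.mem_univ k, mul_pos (hℓ i) (hpos_k _)⟩

lemma pow_le_sum_pow_apply (hM : ∀ i j, 0 ≤ M i j) {s : ℝ} (hs : 0 ≤ s)
    (h : ∀ i, s ≤ ∑ j, M i j) (k : ℕ) (i : m) : s ^ k ≤ ∑ j, (M ^ k) i j := by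
  have := powRowSumDev_nonneg (c := 1) hM hs (fun i => by simpa [powRowSumDev] using h i) k i
  simpa [powRowSumDev] using this

end RowSums

section RowSumBounds

attribute [local instance] Matrix.linftyOpNormedRing Matrix.linftyOpNormedAlgebra

variable {m : Type*} [Fintype m] {M : Matrix m m ℝ}

lemma coe_sum_nnnorm_map_ofReal (hM : ∀ i j, 0 ≤ M i j) (i : m) :
    ((∑ j, ‖M.map Complex.ofReal i j‖₊ : NNReal) : ℝ) = ∑ j, M i j := by
  push_cast
  simp [abs_of_nonneg (hM _ _)]

variable [DecidableEq m]

lemma le_specRad_of_pow_le_norm_pow {q : ℝ} (hq : 0 ≤ q)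
    (h : ∀ k : ℕ, q ^ k ≤ ‖M.map Complex.ofReal ^ k‖) : q ≤ specRad M := by
  have hσ : spectralRadius ℂ (M.map Complex.ofReal) ≤ ENNReal.ofReal (specRad M) :=
    iSup₂_le fun μ hμ => by
      rw [← enorm_eq_nnnorm, ← ofReal_norm]
      exact ENNReal.ofReal_le_ofReal (norm_le_specRad M hμ)
  have hq_le : ∀ᶠ k : ℕ in atTop,
      ENNReal.ofReal q ≤ ENNReal.ofReal (‖M.map Complex.ofReal ^ k‖ ^ (1 / k : ℝ)) := by
    filter_upwards [eventually_ne_atTop 0] with k hk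
    refine ENNReal.ofReal_le_ofReal ?_
    calc q = (q ^ k) ^ (1 / k : ℝ) := by rw [one_div, Real.pow_rpow_inv_natCast hq hk]
      _ ≤ _ := Real.rpow_le_rpow (pow_nonneg hq k) (h k) (by positivity)
  have := ge_of_tendsto (spectrum.pow_norm_pow_one_div_tendsto_nhds_spectralRadius _) hq_le
  exact (ENNReal.ofReal_le_ofReal_iff (specRad_nonneg M)).mp (this.trans hσ)

lemma sum_le_norm_map_ofReal (hM : ∀ i j, 0 ≤ M i j) (i : m) :
    ∑ j, M i j ≤ ‖M.map Complex.ofReal‖ := by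
  rw [Matrix.linfty_opNorm_def, ← coe_sum_nnnorm_map_ofReal hM, NNReal.coe_le_coe]
  exact Finset.le_sup (f := fun i => ∑ j, ‖M.map Complex.ofReal i j‖₊) (Finset.mem_univ i)

lemma norm_map_ofReal_le (hM : ∀ i j, 0 ≤ M i j) {S : ℝ} (hS0 : 0 ≤ S)
    (hS : ∀ i, ∑ j, M i j ≤ S) : ‖M.map Complex.ofReal‖ ≤ S := by
  rw [Matrix.linfty_opNorm_def, ← NNReal.coe_mk S hS0, NNReal.coe_le_coe]
  refine Finset.sup_le fun i _ => ?_
  rw [← NNReal.coe_le_coe, coe_sum_nnnorm_map_ofReal hM]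
  exact hS i

variable [Nonempty m]

lemma specRad_le_norm : specRad M ≤ ‖M.map Complex.ofReal‖ := by
  obtain ⟨μ, hμ, hμρ⟩ := exists_norm_eq_specRad M
  exact hμρ ▸ spectrum.norm_le_norm_of_mem hμ

lemma le_specRad_of_le_sum (hM : ∀ i j, 0 ≤ M i j) {s : ℝ} (h : ∀ i, s ≤ ∑ j, M i j) :
    s ≤ specRad M := by
  rcases le_or_gt s 0 with hs | hs
  · exact hs.trans (specRad_nonneg M)
  refine le_specRad_of_pow_le_norm_pow hs.le fun k => ?_
  rw [← map_ofReal_pow]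
  exact (pow_le_sum_pow_apply hM hs.le h k (Classical.arbitrary m)).trans
    (sum_le_norm_map_ofReal (Matrix.pow_apply_nonneg hM k) _)

lemma specRad_le_of_sum_le (hM : ∀ i j, 0 ≤ M i j) {S : ℝ} (h : ∀ i, ∑ j, M i j ≤ S) :
    specRad M ≤ S :=
  specRad_le_norm.trans <| norm_map_ofReal_le hM
    ((Finset.sum_nonneg fun j _ => hM _ j).trans (h (Classical.arbitrary m))) h

lemma specRad_lt_of_sum_lt (hM : ∀ i j, 0 ≤ M i j) {S : ℝ} (h : ∀ i, ∑ j, M i j < S) :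
    specRad M < S := by
  obtain ⟨i, -, hi⟩ := Finset.exists_max_image Finset.univ (fun i => ∑ j, M i j)
    Finset.univ_nonempty
  exact (specRad_le_of_sum_le hM fun i' => hi i' (Finset.mem_univ i')).trans_lt (h i)

lemma lt_specRad_of_lt_sum (hM : ∀ i j, 0 ≤ M i j) {s : ℝ} (h : ∀ i, s < ∑ j, M i j) :
    s < specRad M := by
  obtain ⟨i, -, hi⟩ := Finset.exists_min_image Finset.univ (fun i => ∑ j, M i j)
    Finset.univ_nonempty
  exact (h i).trans_le (le_specRad_of_le_sum hM fun i' => hi i' (Finset.mem_univ i'))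

end RowSumBounds

section Irreducible

variable {n : ℕ} {M : Matrix (Fin n) (Fin n) ℝ}

lemma Irred.exists_pow_pos (hM : ∀ i j, 0 ≤ M i j) (hirr : Irred M) (i j : Fin n) :
    ∃ ℓ, 0 < (M ^ ℓ) i j := by
  induction hirr i j with
  | refl => exact ⟨0, by simp⟩
  | @tail b c _ hbc ih =>
    obtain ⟨ℓ, hℓ⟩ := ih
    refine ⟨ℓ + 1, ?_⟩
    rw [pow_succ, Matrix.mul_apply]
    exact Finset.sum_pos' (fun l _ => mul_nonneg (Matrix.pow_apply_nonneg hM ℓ i l) (hM l c))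
      ⟨b, Finset.mem_univ b, mul_pos hℓ ((hM b c).lt_of_ne' hbc)⟩

lemma Irred.specRad_lt_of_sum_le_of_lt (hM : ∀ i j, 0 ≤ M i j) (hirr : Irred M) {S : ℝ}
    (hS : ∀ i, ∑ j, M i j ≤ S) {k : Fin n} (hk : ∑ j, M k j < S) : specRad M < S := by
  have : Nonempty (Fin n) := ⟨k⟩
  have hS0 : 0 < S := (Finset.sum_nonneg fun j _ => hM k j).trans_lt hk
  obtain ⟨N, hN, hdev⟩ := exists_powRowSumDev_pos (c := -1) hM hS0
    (fun i => by simpa [powRowSumDev] using hS i) (by simpa [powRowSumDev] using hk)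
    (fun i => hirr.exists_pow_pos hM i k)
  refine lt_of_pow_lt_pow_left₀ N hS0.le ?_
  rw [← specRad_pow M hN]
  exact specRad_lt_of_sum_lt (Matrix.pow_apply_nonneg hM N)
    fun i => by simpa [powRowSumDev] using hdev i

lemma Irred.lt_specRad_of_le_sum_of_lt (hM : ∀ i j, 0 ≤ M i j) (hirr : Irred M) {s : ℝ}
    (hs : 0 < s) (h : ∀ i, s ≤ ∑ j, M i j) {k : Fin n} (hk : s < ∑ j, M k j) :
    s < specRad M := by
  have : Nonempty (Fin n) := ⟨k⟩
  obtain ⟨N, hN, hdev⟩ := exists_powRowSumDev_pos (c := 1) hM hs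
    (fun i => by simpa [powRowSumDev] using h i) (by simpa [powRowSumDev] using hk)
    (fun i => hirr.exists_pow_pos hM i k)
  refine lt_of_pow_lt_pow_left₀ N (specRad_nonneg M) ?_
  rw [← specRad_pow M hN]
  exact lt_specRad_of_lt_sum (Matrix.pow_apply_nonneg hM N)
    fun i => by simpa [powRowSumDev] using hdev i

variable [NeZero n]

lemma Irred.specRad_eq_iff_of_sum_le (hM : ∀ i j, 0 ≤ M i j) (hirr : Irred M) {S : ℝ}
    (hS : ∀ i, ∑ j, M i j ≤ S) : specRad M = S ↔ ∀ i, ∑ j, M i j = S := by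
  refine ⟨fun h i => ?_, fun h => ?_⟩
  · by_contra hi
    exact (hirr.specRad_lt_of_sum_le_of_lt hM hS ((hS i).lt_of_ne hi)).ne h
  · exact (specRad_le_of_sum_le hM hS).antisymm (le_specRad_of_le_sum hM fun i => (h i).ge)

lemma Irred.specRad_eq_iff_of_le_sum (hM : ∀ i j, 0 ≤ M i j) (hirr : Irred M) {s : ℝ}
    (hs : 0 < s) (h : ∀ i, s ≤ ∑ j, M i j) : specRad M = s ↔ ∀ i, ∑ j, M i j = s := by
  refine ⟨fun hρ i => ?_, fun hsum => ?_⟩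
  · by_contra hi
    exact (hirr.lt_specRad_of_le_sum_of_lt hM hs h ((h i).lt_of_ne' hi)).ne' hρ
  · exact (specRad_le_of_sum_le hM fun i => (hsum i).le).antisymm (le_specRad_of_le_sum hM h)

end Irreducible

lemma dirCycle_iff_eq_finRotate {n : ℕ} (a b : Fin n) : dirCycle n a b ↔ b = finRotate n a := by
  rcases n with _ | k
  · exact a.elim0
  · simp [dirCycle, Fin.ext_iff, Fin.val_add]

lemma Equiv.Perm.isConj_finRotate {n : ℕ} (hn : 2 ≤ n) {σ : Equiv.Perm (Fin n)}
    (hσ : ∀ x, σ x ≠ x) (hcyc : ∀ x y, σ.SameCycle x y) : IsConj σ (finRotate n) := by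
  have hsupp : σ.support = Finset.univ :=
    Finset.eq_univ_of_forall fun x => σ.mem_support.mpr (hσ x)
  have hcycle : σ.IsCycle := ⟨⟨0, by omega⟩, hσ _, fun y _ => hcyc _ y⟩
  rw [Equiv.Perm.isConj_iff_cycleType_eq, hcycle.cycleType, cycleType_finRotate_of_le hn, hsupp,
    Finset.card_univ, Fintype.card_fin]

section Digraph

variable {n : ℕ} {G : Fin n → Fin n → Prop}

lemma filter_adj_subset_erase (hGs : ∀ i, ¬ G i i) (u : Fin n) :
    Finset.univ.filter (G u) ⊆ Finset.univ.erase u :=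
  fun v hv => Finset.mem_erase.mpr ⟨fun h => hGs u (h ▸ (Finset.mem_filter.mp hv).2),
    Finset.mem_univ v⟩

lemma outdeg_lt (hGs : ∀ i, ¬ G i i) (u : Fin n) : outdeg G u < n := by
  have := Finset.card_le_card (filter_adj_subset_erase hGs u)
  rw [Finset.card_erase_of_mem (Finset.mem_univ u), Finset.card_univ, Fintype.card_fin] at this
  exact lt_of_le_of_lt this (Nat.sub_lt (u.pos) one_pos)

lemma outdeg_add_one_eq_iff (hGs : ∀ i, ¬ G i i) (u : Fin n) :
    outdeg G u + 1 = n ↔ ∀ v, G u v ↔ u ≠ v := by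
  have hcard : (Finset.univ.erase u).card + 1 = n := by
    rw [Finset.card_erase_add_one (Finset.mem_univ u), Finset.card_univ, Fintype.card_fin]
  calc outdeg G u + 1 = n ↔ outdeg G u = (Finset.univ.erase u).card := by omega
    _ ↔ Finset.univ.filter (G u) = Finset.univ.erase u :=
      ⟨fun h => Finset.eq_of_subset_of_card_le (filter_adj_subset_erase hGs u) h.ge,
        fun h => by rw [outdeg, h]⟩
    _ ↔ ∀ v, G u v ↔ u ≠ v := by simp [Finset.ext_iff, ne_comm]

lemma exists_in_neighbor (hn : 2 ≤ n) (hSC : SConn G) (v : Fin n) : ∃ u, G u v := by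
  have : Nontrivial (Fin n) := Fin.nontrivial_iff_two_le.mpr hn
  obtain ⟨w, hw⟩ := exists_ne v
  rcases (hSC w v).cases_tail with h | ⟨u, -, hu⟩
  · exact absurd h.symm hw
  · exact ⟨u, hu⟩

lemma one_le_outdeg (hn : 2 ≤ n) (hSC : SConn G) (u : Fin n) : 1 ≤ outdeg G u := by
  have : Nontrivial (Fin n) := Fin.nontrivial_iff_two_le.mpr hn
  obtain ⟨w, hw⟩ := exists_ne u
  rcases (hSC u w).cases_head with h | ⟨v, hv, -⟩
  · exact absurd h.symm hw
  · exact Finset.card_pos.mpr ⟨v, Finset.mem_filter.mpr ⟨Finset.mem_univ v, hv⟩⟩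

lemma dIso_dirCycle_iff (hn : 2 ≤ n) (hGs : ∀ i, ¬ G i i) (hSC : SConn G) :
    DIso G (dirCycle n) ↔ ∀ i, outdeg G i = 1 := by
  constructor
  · rintro ⟨e, he⟩ i
    rw [outdeg, Finset.card_eq_one]
    refine ⟨e.symm (finRotate n (e i)), Finset.ext fun j => ?_⟩
    simp [he, dirCycle_iff_eq_finRotate, Equiv.eq_symm_apply]
  · intro hdeg
    choose f hf using fun i => Finset.card_eq_one.mp (hdeg i)
    have hG : ∀ u v, G u v ↔ v = f u := fun u v => by
      simpa using Finset.ext_iff.mp (hf u) v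
    have hsurj : Function.Surjective f := fun v =>
      (exists_in_neighbor hn hSC v).imp fun u hu => ((hG u v).mp hu).symm
    set σ : Equiv.Perm (Fin n) :=
      Equiv.ofBijective f ⟨Finite.injective_iff_surjective.mpr hsurj, hsurj⟩
    have hσ : ∀ x, σ x ≠ x := fun x hx => hGs x ((hG x x).mpr hx.symm)
    have hcyc : ∀ x y, σ.SameCycle x y := fun x y => by
      induction hSC x y with
      | refl => exact Equiv.Perm.SameCycle.refl σ x
      | tail _ hbc ih => exact (hG _ _).mp hbc ▸ Equiv.Perm.sameCycle_apply_right.mpr ih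
    obtain ⟨c, hc⟩ := isConj_iff.mp (σ.isConj_finRotate hn hσ hcyc)
    refine ⟨c, fun u v => ?_⟩
    rw [hG, dirCycle_iff_eq_finRotate, ← hc]
    simp only [Equiv.Perm.mul_apply, Equiv.Perm.inv_def, Equiv.symm_apply_apply,
      EmbeddingLike.apply_eq_iff_eq]
    rfl

end Digraph

section Aalpha

variable {n : ℕ} {α : ℝ} {G : Fin n → Fin n → Prop}

lemma sum_Aalpha_apply (i : Fin n) : ∑ j, Aalpha α G i j = outdeg G i := by
  simp only [Aalpha, Matrix.add_apply, Matrix.smul_apply, smul_eq_mul, Matrix.of_apply]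
  rw [Finset.sum_add_distrib, ← Finset.mul_sum, ← Finset.mul_sum, Finset.sum_boole]
  simp [Matrix.diagonal_apply, outdeg]
  ring

lemma Aalpha_nonneg (hα0 : 0 ≤ α) (hα1 : α ≤ 1) (i j : Fin n) : 0 ≤ Aalpha α G i j := by
  simp only [Aalpha, Matrix.add_apply, Matrix.smul_apply, Matrix.diagonal_apply, Matrix.of_apply,
    smul_eq_mul]
  exact add_nonneg (mul_nonneg hα0 (by split_ifs <;> positivity))
    (mul_nonneg (sub_nonneg.mpr hα1) (by split_ifs <;> norm_num))

lemma irred_Aalpha (hα1 : α < 1) (hGs : ∀ i, ¬ G i i) (hSC : SConn G) : Irred (Aalpha α G) :=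
  fun i j => Relation.ReflTransGen.mono (fun a b hab => by
    have hne : a ≠ b := fun h => hGs a (h ▸ hab)
    simp [Aalpha, hne, hab]
    linarith) i j (hSC i j)

end Aalpha

/-- `1 ≤ λ_α(G) ≤ n-1` for strongly connected `G`, with equality
characterizations: `n-1` iff `G` is complete, `1` iff `G` is the directed cycle. -/
theorem stmt3 {n : ℕ} (hn : 2 ≤ n) (α : ℝ) (hα0 : 0 ≤ α) (hα1 : α < 1)
    (G : Fin n → Fin n → Prop) (hGs : ∀ i, ¬ G i i) (hSC : SConn G) :
    1 ≤ lamAlpha α G ∧ lamAlpha α G ≤ (n : ℝ) - 1 ∧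
      (lamAlpha α G = (n : ℝ) - 1 ↔ ∀ u v : Fin n, G u v ↔ u ≠ v) ∧
      (lamAlpha α G = 1 ↔ DIso G (dirCycle n)) := by
  have : NeZero n := ⟨by omega⟩
  have hM : ∀ i j, 0 ≤ Aalpha α G i j := Aalpha_nonneg hα0 hα1.le
  have hirr := irred_Aalpha hα1 hGs hSC
  have hlow : ∀ i, (1 : ℝ) ≤ ∑ j, Aalpha α G i j := fun i => by
    rw [sum_Aalpha_apply]
    exact_mod_cast one_le_outdeg hn hSC i
  have hup : ∀ i, ∑ j, Aalpha α G i j ≤ (n : ℝ) - 1 := fun i => by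
    rw [sum_Aalpha_apply, le_sub_iff_add_le]
    exact_mod_cast outdeg_lt hGs i
  refine ⟨le_specRad_of_le_sum hM hlow, specRad_le_of_sum_le hM hup, ?_, ?_⟩
  · rw [lamAlpha, hirr.specRad_eq_iff_of_sum_le hM hup]
    simp only [sum_Aalpha_apply, eq_sub_iff_add_eq]
    exact_mod_cast forall_congr' (outdeg_add_one_eq_iff hGs)
  · rw [lamAlpha, hirr.specRad_eq_iff_of_le_sum hM one_pos hlow, dIso_dirCycle_iff hn hGs hSC]
    simp only [sum_Aalpha_apply, Nat.cast_eq_one]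
end

section
/- Let G be a strongly connected digraph on n vertices which is not the directed cycle, α ∈ [0,1), and let X be the Perron vector of A_α(G). If P = v_1 v_2 ... v_k (k ≥ 3) is a directed path in G such that each internal vertex v_i (2 ≤ i ≤ k−1) has outdegree 1, then x_2 < x_3 < ... < x_{k−1} < x_k. -/
open scoped Classical
open Matrix

lemma mulVec_Aalpha {n : ℕ} (α : ℝ) (G : Fin n → Fin n → Prop) (X : Fin n → ℝ) (i : Fin n) :
    (Aalpha α G).mulVec X i
      = α * (outdeg G i) * X i
        + (1 - α) * ∑ j ∈ Finset.univ.filter (fun j => G i j), X j := by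
  simp only [Aalpha, Matrix.mulVec, dotProduct, Matrix.add_apply, Matrix.smul_apply,
    Matrix.of_apply, smul_eq_mul, add_mul, Finset.sum_add_distrib]
  congr 1
  · rw [Finset.sum_eq_single i]
    · simp [Matrix.diagonal_apply_eq, mul_assoc]
    · intro b _ hb; simp [Matrix.diagonal_apply_ne' _ hb]
    · simp
  · rw [← Finset.sum_filter_of_ne (p := fun j => G i j) (f := fun j => ((1-α) * if G i j then 1 else 0) * X j)
      (by intro j _ h; by_contra hG; simp [hG] at h)]
    rw [Finset.mul_sum]
    apply Finset.sum_congr rfl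
    intro j hj
    simp only [Finset.mem_filter] at hj
    simp [hj.2]

lemma exists_arc_out {n : ℕ} (hn : 2 ≤ n) {G : Fin n → Fin n → Prop} (hSC : SConn G)
    (i : Fin n) : ∃ j, G i j := by
  obtain ⟨u, hu⟩ : ∃ u : Fin n, u ≠ i := by
    have : 1 < Fintype.card (Fin n) := by simp only [Fintype.card_fin]; omega
    exact Fintype.exists_ne_of_one_lt_card this i
  rcases (hSC i u).cases_head with h | ⟨c, hc, _⟩
  · exact absurd h.symm hu
  · exact ⟨c, hc⟩

lemma exists_arc_in {n : ℕ} (hn : 2 ≤ n) {G : Fin n → Fin n → Prop} (hSC : SConn G)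
    (i : Fin n) : ∃ j, G j i := by
  obtain ⟨u, hu⟩ : ∃ u : Fin n, u ≠ i := by
    have : 1 < Fintype.card (Fin n) := by simp only [Fintype.card_fin]; omega
    exact Fintype.exists_ne_of_one_lt_card this i
  rcases (hSC u i).cases_tail with h | ⟨c, _, hc⟩
  · exact absurd h.symm hu
  · exact ⟨c, hc⟩

lemma iso_cycle {n : ℕ} (hn : 2 ≤ n) {G : Fin n → Fin n → Prop} (hSC : SConn G)
    (hdeg : ∀ i, outdeg G i = 1) : DIso G (dirCycle n) := by
  -- unique successor function
  have hf : ∀ i, ∃ a, Finset.univ.filter (fun j => G i j) = {a} := by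
    intro i; exact Finset.card_eq_one.mp (hdeg i)
  choose f hfs using hf
  have hGf : ∀ i j, G i j ↔ j = f i := by
    intro i j
    constructor
    · intro h
      have : j ∈ Finset.univ.filter (fun j => G i j) := by simp [h]
      rw [hfs i] at this; simpa using this
    · rintro rfl
      have : f i ∈ Finset.univ.filter (fun j => G i j) := by rw [hfs i]; simp
      simpa using this
  -- f surjective hence injective
  have hfsurj : Function.Surjective f := by
    intro v
    obtain ⟨u, hu⟩ := exists_arc_in hn hSC v
    exact ⟨u, ((hGf u v).mp hu).symm⟩
  have hfinj : Function.Injective f := Finite.injective_iff_surjective.mpr hfsurj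
  -- base point and reachability
  set v0 : Fin n := ⟨0, by omega⟩ with hv0
  have hreach : ∀ v, ∃ m, f^[m] v0 = v := by
    intro v
    have h := hSC v0 v
    induction h with
    | refl => exact ⟨0, rfl⟩
    | tail _ harc ih =>
      obtain ⟨m, hm⟩ := ih
      rename_i b c _
      refine ⟨m + 1, ?_⟩
      rw [Function.iterate_succ_apply', hm, ← (hGf b c).mp harc]
  -- period
  obtain ⟨a, b, hab, heq⟩ : ∃ a b : Fin (n+1), a ≠ b ∧ f^[a.val] v0 = f^[b.val] v0 := by
    have hcard : Fintype.card (Fin n) < Fintype.card (Fin (n+1)) := by simp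
    obtain ⟨a, b, hab, h⟩ := Fintype.exists_ne_map_eq_of_card_lt
      (fun i : Fin (n+1) => f^[i.val] v0) hcard
    exact ⟨a, b, hab, h⟩
  wlog hlt : a.val < b.val generalizing a b
  · exact this b a hab.symm heq.symm (by have := Fin.val_ne_of_ne hab; omega)
  have hper0 : ∃ p, 0 < p ∧ p ≤ n ∧ f^[p] v0 = v0 := by
    refine ⟨b.val - a.val, by omega, by omega, ?_⟩
    have : f^[a.val] (f^[b.val - a.val] v0) = f^[a.val] v0 := by
      rw [← Function.iterate_add_apply]
      have : a.val + (b.val - a.val) = b.val := by omega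
      rw [this, heq]
    exact (hfinj.iterate a.val) this
  obtain ⟨p, hp0, hpn, hp⟩ := hper0
  have hmult : ∀ q, f^[p * q] v0 = v0 := by
    intro q
    induction q with
    | zero => simp
    | succ q ih =>
      rw [Nat.mul_succ, Function.iterate_add_apply, hp, ih]
  have hmod : ∀ m, f^[m] v0 = f^[m % p] v0 := by
    intro m
    conv_lhs => rw [← Nat.mod_add_div m p]
    rw [Function.iterate_add_apply, hmult]
  -- the map g
  set g : Fin n → Fin n := fun i => f^[i.val] v0 with hg
  have hgsurj : Function.Surjective g := by
    intro v
    obtain ⟨m, hm⟩ := hreach v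
    refine ⟨⟨m % p, lt_of_lt_of_le (Nat.mod_lt _ hp0) hpn⟩, ?_⟩
    simp only [hg]
    rw [← hmod, hm]
  have hgbij : Function.Bijective g := Finite.injective_iff_bijective.mp
    (Finite.injective_iff_surjective.mpr hgsurj)
  have hpn' : p = n := by
    by_contra hne
    have hplt : p < n := lt_of_le_of_ne hpn hne
    have : g ⟨p, hplt⟩ = g ⟨0, by omega⟩ := by simp [hg, hp]
    have := hgbij.injective this
    simp only [Fin.mk.injEq] at this
    omega
  have hn0 : 0 < n := by omega
  have hmodn : ∀ m, f^[m] v0 = f^[m % n] v0 := hpn' ▸ hmod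
  set e : Equiv.Perm (Fin n) := (Equiv.ofBijective g hgbij).symm with he
  refine ⟨e, ?_⟩
  intro u v
  have hu : u = g (e u) := ((Equiv.ofBijective g hgbij).apply_symm_apply u).symm
  have hfu : f u = g ⟨((e u).val + 1) % n, Nat.mod_lt _ hn0⟩ := by
    conv_lhs => rw [hu]
    simp only [hg]
    rw [← Function.iterate_succ_apply' f, ← hmodn]
  rw [hGf u v, dirCycle]
  constructor
  · rintro rfl
    rw [hfu]
    have : e (g ⟨((e u).val + 1) % n, Nat.mod_lt _ hn0⟩) = ⟨((e u).val + 1) % n, Nat.mod_lt _ hn0⟩ := by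
      simp [he, Equiv.symm_apply_eq]
    rw [this]
  · intro hcyc
    rw [hfu]
    have hev : e v = ⟨((e u).val + 1) % n, Nat.mod_lt _ hn0⟩ := Fin.ext hcyc
    have := congrArg e.symm hev
    rw [Equiv.symm_apply_apply] at this
    rw [this]
    simp [he]

lemma lam_gt_one {n : ℕ} (hn : 2 ≤ n) {α : ℝ} (hα0 : 0 ≤ α) (hα1 : α < 1)
    {G : Fin n → Fin n → Prop} (hSC : SConn G) (hnc : ¬ DIso G (dirCycle n))
    {lam : ℝ} {X : Fin n → ℝ} (hXpos : ∀ i, 0 < X i)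
    (hX : (Aalpha α G).mulVec X = lam • X) : 1 < lam := by
  by_contra hle
  push_neg at hle
  have heig : ∀ i, α * (outdeg G i) * X i
      + (1 - α) * ∑ j ∈ Finset.univ.filter (fun j => G i j), X j = lam * X i := by
    intro i
    rw [← mulVec_Aalpha, hX]
    simp
  obtain ⟨i0, -, hi0⟩ := Finset.exists_min_image Finset.univ X
    ⟨⟨0, by omega⟩, Finset.mem_univ _⟩
  set m := X i0 with hm
  have hmin : ∀ j : Fin n, m ≤ X j := fun j => hi0 j (Finset.mem_univ j)
  have hm0 : 0 < m := hXpos i0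
  have h1α : (0:ℝ) < 1 - α := by linarith
  have step : ∀ i, X i = m → outdeg G i = 1 ∧ ∀ j, G i j → X j = m := by
    intro i him
    set d := outdeg G i with hd
    set S := ∑ j ∈ Finset.univ.filter (fun j => G i j), X j with hS
    have hd1 : 1 ≤ d := by
      obtain ⟨j, hj⟩ := exists_arc_out hn hSC i
      have : j ∈ Finset.univ.filter (fun j => G i j) := by simp [hj]
      exact Finset.card_pos.mpr ⟨j, this⟩
    have hsum : (d : ℝ) * m ≤ S := by
      have : ∑ _j ∈ Finset.univ.filter (fun j => G i j), m ≤ S :=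
        Finset.sum_le_sum (fun j _ => hmin j)
      simpa [mul_comm, hd, outdeg] using this
    have hkey : (d : ℝ) * m ≤ lam * m := by
      have := heig i
      rw [him] at this
      nlinarith
    have hdlam : (d : ℝ) ≤ lam := le_of_mul_le_mul_right hkey hm0
    have hdeq : d = 1 := by
      have : (d : ℝ) ≤ 1 := le_trans hdlam hle
      exact le_antisymm (by exact_mod_cast this) hd1
    obtain ⟨j0, hj0⟩ := Finset.card_eq_one.mp hdeq
    have hSj0 : S = X j0 := by rw [hS, hj0, Finset.sum_singleton]
    have hXj0 : X j0 = m := by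
      have he := heig i
      rw [him, ← hS, hSj0, ← hd, hdeq] at he
      push_cast at he
      have hXj0le : X j0 ≤ m := by nlinarith
      exact le_antisymm hXj0le (hmin j0)
    refine ⟨hdeq, fun j hj => ?_⟩
    have : j ∈ Finset.univ.filter (fun j => G i j) := by simp [hj]
    rw [hj0] at this
    simp at this
    rw [this, hXj0]
  have hall : ∀ v, X v = m := by
    intro v
    have h := hSC i0 v
    induction h with
    | refl => rfl
    | tail _ harc ih => exact (step _ ih).2 _ harc
  exact hnc (iso_cycle hn hSC (fun v => (step v (hall v)).1))

/-- along a directed path whose internal vertices have outdegree `1`,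
the Perron vector entries strictly increase: `x_2 < x_3 < … < x_k`. -/
theorem stmt7 {n k : ℕ} (hk : 3 ≤ k) (α : ℝ) (hα0 : 0 ≤ α) (hα1 : α < 1)
    (G : Fin n → Fin n → Prop) (hGs : ∀ i, ¬ G i i) (hSC : SConn G)
    (hnc : ¬ DIso G (dirCycle n))
    (X : Fin n → ℝ) (hXpos : ∀ i, 0 < X i)
    (hX : (Aalpha α G).mulVec X = lamAlpha α G • X)
    (c : Fin k → Fin n) (hcinj : Function.Injective c)
    (hpath : ∀ i : Fin k, ∀ h : i.val + 1 < k, G (c i) (c ⟨i.val + 1, h⟩))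
    (hdeg : ∀ i : Fin k, 1 ≤ i.val → i.val ≤ k - 2 → outdeg G (c i) = 1) :
    ∀ i j : Fin k, 1 ≤ i.val → i < j → X (c i) < X (c j) := by
  have hn : 2 ≤ n := by
    have := Fintype.card_le_of_injective c hcinj
    simp at this
    omega
  set lam := lamAlpha α G with hlamdef
  have hlam : 1 < lam := lam_gt_one hn hα0 hα1 hSC hnc hXpos hX
  have h1α : (0:ℝ) < 1 - α := by linarith
  have heig : ∀ i, α * (outdeg G i) * X i
      + (1 - α) * ∑ j ∈ Finset.univ.filter (fun j => G i j), X j = lam * X i := by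
    intro i
    rw [← mulVec_Aalpha, hX]
    simp
  have step : ∀ (i : Fin k) (_ : 1 ≤ i.val) (h2 : i.val + 1 < k),
      X (c i) < X (c ⟨i.val + 1, h2⟩) := by
    intro i h1 h2
    have hd : outdeg G (c i) = 1 := hdeg i h1 (by omega)
    obtain ⟨j0, hj0⟩ := Finset.card_eq_one.mp hd
    have hj0eq : j0 = c ⟨i.val + 1, h2⟩ := by
      have : c ⟨i.val + 1, h2⟩ ∈ Finset.univ.filter (fun j => G (c i) j) := by
        simp [hpath i h2]
      rw [hj0, Finset.mem_singleton] at this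
      exact this.symm
    have he := heig (c i)
    rw [hd, hj0, Finset.sum_singleton, hj0eq] at he
    push_cast at he
    have hpos := hXpos (c i)
    nlinarith
  have chain : ∀ (jv : ℕ) (hjv : jv < k) (i : Fin k),
      1 ≤ i.val → i.val < jv → X (c i) < X (c ⟨jv, hjv⟩) := by
    intro jv
    induction jv with
    | zero => intro _ i _ h; omega
    | succ mv ih =>
      intro hjv i h1 hlt
      rcases Nat.lt_succ_iff_lt_or_eq.mp hlt with h | h
      · have hmk : mv < k := by omega
        have h2 := ih hmk i h1 h
        have hstep := step ⟨mv, hmk⟩ (show 1 ≤ mv by omega) (show mv + 1 < k by omega)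
        exact lt_trans h2 hstep
      · have hstep := step i h1 (by omega)
        have : (⟨i.val + 1, by omega⟩ : Fin k) = ⟨mv + 1, hjv⟩ := Fin.ext (by simp; omega)
        rwa [this] at hstep
  intro i j h1 hij
  have : X (c i) < X (c ⟨j.val, j.isLt⟩) := chain j.val j.isLt i h1 hij
  simpa using this
end

section
/- For 2 ≤ g ≤ n−1 and α ∈ [0,1), let C_{n,g} be the digraph obtained by attaching the directed path v_g v_{g+1} ... v_n v_1 to the directed cycle v_1 v_2 ... v_g v_1 (sharing only vertices v_g and v_1), and let C'_{n,g} = C_{n,g} − {(v_n, v_1)} + {(v_n, v_g)}. Then λ_α(C'_{n,g}) > λ_α(C_{n,g}). -/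
open scoped Classical
open Matrix

/-! Write `x = α + (1 - α) s`. Propagating the eigen-equations along the arcs shows that
`A_α(C_{n,g})` has a positive left eigenvector for `x` as soon as
`((1 - α) s - α) s^(n-1) = (1 - α) (s^(n-g) + 1)`, and then the Collatz–Wielandt bound gives
`λ_α(C_{n,g}) ≤ x`. Likewise `A_α(C'_{n,g})` has an eigenvector for `α + (1 - α) t` as soon as
`t` solves the same equation with `1` replaced by `t^(g-1)`. At the root `s > 1` of the first
equation the left side of the second one is below its right side (as `s^(g-1) > 1`), while it is
above for large `t`, so the intermediate value theorem gives a root `t > s`; hence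
`λ_α(C_{n,g}) ≤ α + (1 - α) s < α + (1 - α) t ≤ λ_α(C'_{n,g})`. -/

section SpectralRadius

variable {m : Type*} [Fintype m] [DecidableEq m]

theorem Matrix.isRoot_charpoly_iff_exists_mulVec_eq_smul {K : Type*} [Field K]
    (A : Matrix m m K) (μ : K) : A.charpoly.IsRoot μ ↔ ∃ v ≠ 0, A *ᵥ v = μ • v := by
  rw [← Matrix.charpoly_toLin', ← Module.End.hasEigenvalue_iff_isRoot_charpoly]
  constructor
  · intro h
    obtain ⟨v, hv, hv0⟩ := h.exists_hasEigenvector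
    exact ⟨v, hv0, Module.End.mem_eigenspace_iff.mp hv⟩
  · rintro ⟨v, hv0, hv⟩
    exact Module.End.hasEigenvalue_of_hasEigenvector ⟨Module.End.mem_eigenspace_iff.mpr hv, hv0⟩

theorem bddAbove_specRad_set (M : Matrix m m ℝ) :
    BddAbove {r : ℝ | ∃ μ : ℂ, (M.map Complex.ofReal).charpoly.IsRoot μ ∧ r = ‖μ‖} := by
  have hfin := Polynomial.finite_setOfPred_isRoot (M.map Complex.ofReal).charpoly_monic.ne_zero
  refine ((hfin.image (‖·‖)).bddAbove).mono ?_
  rintro r ⟨μ, hμ, rfl⟩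
  exact ⟨μ, hμ, rfl⟩

theorem abs_le_specRad_of_mulVec_eq_smul {M : Matrix m m ℝ} {x : ℝ} {v : m → ℝ} (hv : v ≠ 0)
    (hMv : M *ᵥ v = x • v) : |x| ≤ specRad M := by
  refine le_csSup (bddAbove_specRad_set M) ⟨x, ?_, by simp⟩
  rw [Matrix.isRoot_charpoly_iff_exists_mulVec_eq_smul]
  refine ⟨fun i => v i, fun h => hv (funext fun i => by simpa using congrFun h i), ?_⟩
  ext i
  simpa [Matrix.mulVec, dotProduct] using congrArg Complex.ofReal (congrFun hMv i)

theorem specRad_le_of_transpose_mulVec_le [Nonempty m] {M : Matrix m m ℝ} (hM : ∀ i j, 0 ≤ M i j)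
    {w : m → ℝ} (hw : ∀ i, 0 < w i) {x : ℝ} (hMw : Mᵀ *ᵥ w ≤ x • w) : specRad M ≤ x := by
  have hdeg : 0 < (M.map Complex.ofReal).charpoly.degree := by
    rw [Matrix.charpoly_degree_eq_dim]; exact_mod_cast Fintype.card_pos
  obtain ⟨μ₀, hμ₀⟩ := Complex.exists_root hdeg
  refine csSup_le ⟨_, μ₀, hμ₀, rfl⟩ ?_
  rintro _ ⟨μ, hμ, rfl⟩
  obtain ⟨u, hu0, hu⟩ := (Matrix.isRoot_charpoly_iff_exists_mulVec_eq_smul _ μ).mp hμ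
  set a : m → ℝ := fun j => ‖u j‖
  have hMa : ‖μ‖ • a ≤ M *ᵥ a := fun i => by
    calc ‖μ‖ * ‖u i‖ = ‖∑ j, (M i j : ℂ) * u j‖ := by
          rw [← norm_mul]
          simpa [Matrix.mulVec, dotProduct] using congrArg norm (congrFun hu i).symm
      _ ≤ ∑ j, M i j * ‖u j‖ :=
          (norm_sum_le _ _).trans_eq (by simp [abs_of_nonneg (hM i _)])
  have hpos : 0 < w ⬝ᵥ a := by
    obtain ⟨i, hi⟩ := Function.ne_iff.mp hu0
    exact Finset.sum_pos' (fun j _ => mul_nonneg (hw j).le (norm_nonneg _))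
      ⟨i, Finset.mem_univ i, mul_pos (hw i) (norm_pos_iff.mpr hi)⟩
  refine le_of_mul_le_mul_right ?_ hpos
  calc ‖μ‖ * (w ⬝ᵥ a) = w ⬝ᵥ (‖μ‖ • a) := by rw [dotProduct_smul, smul_eq_mul]
    _ ≤ w ⬝ᵥ (M *ᵥ a) := dotProduct_le_dotProduct_of_nonneg_left hMa fun i => (hw i).le
    _ = (Mᵀ *ᵥ w) ⬝ᵥ a := by rw [dotProduct_mulVec, Matrix.mulVec_transpose]
    _ ≤ (x • w) ⬝ᵥ a := dotProduct_le_dotProduct_of_nonneg_right hMw fun j => norm_nonneg _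
    _ = x * (w ⬝ᵥ a) := by rw [smul_dotProduct, smul_eq_mul]

end SpectralRadius

section Aalpha

variable {n : ℕ} (G : Fin n → Fin n → Prop)

theorem aalpha_nonneg {α : ℝ} (hα0 : 0 ≤ α) (hα1 : α ≤ 1) (i j : Fin n) :
    0 ≤ Aalpha α G i j := by
  have hdiag : 0 ≤ Matrix.diagonal (fun i => (outdeg G i : ℝ)) i j := by
    by_cases h : i = j <;> simp [h]
  have hadj : (0 : ℝ) ≤ if G i j then 1 else 0 := by positivity
  have := sub_nonneg.mpr hα1
  simp only [Aalpha, Matrix.add_apply, Matrix.smul_apply, Matrix.of_apply, smul_eq_mul]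
  positivity

theorem aalpha_mulVec_apply (α : ℝ) (v : Fin n → ℝ) (i : Fin n) :
    (Aalpha α G *ᵥ v) i = α * outdeg G i * v i + (1 - α) * ∑ j ∈ {j | G i j}, v j := by
  rw [Aalpha, Matrix.add_mulVec, Matrix.smul_mulVec, Matrix.smul_mulVec,
    Pi.add_apply, Pi.smul_apply, Pi.smul_apply, Matrix.mulVec_diagonal, Finset.sum_filter]
  simp [Matrix.mulVec, dotProduct, mul_assoc]

theorem aalpha_transpose_mulVec_apply (α : ℝ) (w : Fin n → ℝ) (j : Fin n) :
    ((Aalpha α G)ᵀ *ᵥ w) j = α * outdeg G j * w j + (1 - α) * ∑ i ∈ {i | G i j}, w i := by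
  rw [Aalpha, Matrix.transpose_add, Matrix.transpose_smul, Matrix.transpose_smul,
    Matrix.diagonal_transpose, Matrix.add_mulVec, Matrix.smul_mulVec,
    Matrix.smul_mulVec, Pi.add_apply, Pi.smul_apply, Pi.smul_apply, Matrix.mulVec_diagonal,
    Finset.sum_filter]
  simp [Matrix.mulVec, dotProduct, mul_assoc]

end Aalpha

theorem exists_gt_mul_pow_eq {α β : ℝ} (hα : 0 ≤ α) (hβ : 0 < β) {N a b : ℕ} (ha : a ≤ N)
    (hb : b ≤ N) {s₀ : ℝ} (hs₀ : 1 ≤ s₀) (hlt : (β * s₀ - α) * s₀ ^ N < β * (s₀ ^ a + s₀ ^ b)) :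
    ∃ t, s₀ < t ∧ (β * t - α) * t ^ N = β * (t ^ a + t ^ b) := by
  set f : ℝ → ℝ := fun t => (β * t - α) * t ^ N - β * (t ^ a + t ^ b)
  set T := s₀ + α / β + 2
  have hsT : s₀ ≤ T := by have := div_nonneg hα hβ.le; linarith
  have hT : 1 ≤ T := hs₀.trans hsT
  have hfT : 0 ≤ f T := by
    have hlead : 2 * β ≤ β * T - α := by
      have : β * (α / β) = α := mul_div_cancel₀ α hβ.ne'
      nlinarith
    have hTa : T ^ a ≤ T ^ N := pow_le_pow_right₀ hT ha
    have hTb : T ^ b ≤ T ^ N := pow_le_pow_right₀ hT hb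
    have hTN : 0 ≤ T ^ N := by positivity
    simp only [f]
    nlinarith
  obtain ⟨t, ⟨hst, -⟩, hft⟩ :=
    intermediate_value_Ioc hsT (by fun_prop : Continuous f).continuousOn
      ⟨by simp only [f]; linarith, hfT⟩
  exact ⟨t, hst, by simp only [f] at hft; linarith⟩

theorem filter_univ_fin_eq_singleton {n a : ℕ} (ha : a < n) {p : Fin n → Prop} [DecidablePred p]
    (hp : ∀ j : Fin n, p j ↔ j.val = a) : ({j | p j} : Finset (Fin n)) = {⟨a, ha⟩} := by
  ext j; simp [hp, Fin.ext_iff]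

theorem filter_univ_fin_eq_pair {n a b : ℕ} (ha : a < n) (hb : b < n) {p : Fin n → Prop}
    [DecidablePred p]
    (hp : ∀ j : Fin n, p j ↔ j.val = a ∨ j.val = b) :
    ({j | p j} : Finset (Fin n)) = {⟨a, ha⟩, ⟨b, hb⟩} := by
  ext j; simp [hp, Fin.ext_iff]

section CycleWithPath

variable {n g : ℕ}

theorem cng_outNbrs_of_ne (i : Fin n) (hi : i.val ≠ g - 1) (hi' : i.val + 1 < n) :
    ({j | Cng n g i j} : Finset (Fin n)) = {⟨i + 1, hi'⟩} :=
  filter_univ_fin_eq_singleton _ fun j => by simp only [Cng]; omega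

theorem cng_outNbrs_last (i : Fin n) (hi : i.val = n - 1) :
    ({j | Cng n g i j} : Finset (Fin n)) = {⟨0, by omega⟩} :=
  filter_univ_fin_eq_singleton _ fun j => by simp only [Cng]; omega

theorem cng_outNbrs_of_eq (hg : 0 < g) (hgn : g < n) (i : Fin n) (hi : i.val = g - 1) :
    ({j | Cng n g i j} : Finset (Fin n)) = {⟨g, hgn⟩, ⟨0, by omega⟩} :=
  filter_univ_fin_eq_pair _ _ fun j => by simp only [Cng]; omega

theorem cng'_outNbrs_of_ne (i : Fin n) (hi : i.val ≠ g - 1) (hi' : i.val + 1 < n) :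
    ({j | Cng' n g i j} : Finset (Fin n)) = {⟨i + 1, hi'⟩} :=
  filter_univ_fin_eq_singleton _ fun j => by simp only [Cng']; omega

theorem cng'_outNbrs_last (hgn : g < n) (i : Fin n) (hi : i.val = n - 1) :
    ({j | Cng' n g i j} : Finset (Fin n)) = {⟨g - 1, by omega⟩} :=
  filter_univ_fin_eq_singleton _ fun j => by simp only [Cng']; omega

theorem cng'_outNbrs_of_eq (hg : 0 < g) (hgn : g < n) (i : Fin n) (hi : i.val = g - 1) :
    ({j | Cng' n g i j} : Finset (Fin n)) = {⟨g, hgn⟩, ⟨0, by omega⟩} :=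
  filter_univ_fin_eq_pair _ _ fun j => by simp only [Cng']; omega

theorem cng_inNbrs_zero (hgn : g < n) (j : Fin n) (hj : j.val = 0) :
    ({i | Cng n g i j} : Finset (Fin n)) = {⟨g - 1, by omega⟩, ⟨n - 1, by omega⟩} :=
  filter_univ_fin_eq_pair _ _ fun i => by simp only [Cng]; omega

theorem cng_inNbrs_of_ne_zero (j : Fin n) (hj : j.val ≠ 0) :
    ({i | Cng n g i j} : Finset (Fin n)) = {⟨j - 1, by omega⟩} :=
  filter_univ_fin_eq_singleton _ fun i => by simp only [Cng]; omega

theorem outdeg_cng_of_ne (i : Fin n) (hi : i.val ≠ g - 1) : outdeg (Cng n g) i = 1 := by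
  by_cases hi' : i.val + 1 < n
  · rw [outdeg, cng_outNbrs_of_ne i hi hi', Finset.card_singleton]
  · rw [outdeg, cng_outNbrs_last i (by omega), Finset.card_singleton]

theorem exists_pos_transpose_mulVec_eq_smul_cng (hg : 2 ≤ g) (hgn : g < n) {α s : ℝ} (hα : α < 1)
    (hs : 0 < s) (hroot : ((1 - α) * s - α) * s ^ (n - 1) = (1 - α) * (s ^ (n - g) + 1)) :
    ∃ w : Fin n → ℝ, (∀ j, 0 < w j) ∧ (Aalpha α (Cng n g))ᵀ *ᵥ w = (α + (1 - α) * s) • w := by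
  have hβ : 0 < 1 - α := by linarith
  have hp : 0 < (1 - α) * s - α := by
    refine pos_of_mul_pos_left (hroot ▸ ?_ : 0 < ((1 - α) * s - α) * s ^ (n - 1)) (by positivity)
    positivity
  -- geometric with ratio `s⁻¹` along the cycle and along the path, with a jump at `v_g`;
  -- the equation at `v_1` is `hroot`
  refine ⟨fun j => if j.val + 2 ≤ g then ((1 - α) * s - α) * s ^ (n - 2 - j.val)
    else (1 - α) * s ^ (n - 1 - j.val), fun j => by dsimp only; split_ifs <;> positivity, ?_⟩
  funext j
  rw [aalpha_transpose_mulVec_apply, Pi.smul_apply, smul_eq_mul]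
  rcases (by omega : j.val = 0 ∨ (0 < j.val ∧ j.val + 2 ≤ g) ∨ j.val = g - 1 ∨ g ≤ j.val)
    with hj | ⟨hj, hj'⟩ | hj | hj
  · rw [outdeg_cng_of_ne j (by omega), cng_inNbrs_zero hgn j hj, Finset.sum_pair (by simp; omega)]
    simp only [hj, if_pos (by omega : 0 + 2 ≤ g), if_neg (by omega : ¬ g - 1 + 2 ≤ g),
      if_neg (by omega : ¬ n - 1 + 2 ≤ g)]
    have hpow : s ^ (n - 1) = s ^ (n - 2 - 0) * s := by rw [← pow_succ]; congr 1; omega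
    rw [hpow] at hroot
    rw [show n - 1 - (g - 1) = n - g by omega, Nat.sub_self, pow_zero]
    push_cast
    linear_combination (-(1 - α)) * hroot
  · rw [outdeg_cng_of_ne j (by omega), cng_inNbrs_of_ne_zero j (by omega), Finset.sum_singleton]
    simp only [if_pos hj', if_pos (by omega : j.val - 1 + 2 ≤ g),
      show n - 2 - (j.val - 1) = n - 2 - j.val + 1 by omega, pow_succ]
    push_cast
    ring
  · rw [outdeg, cng_outNbrs_of_eq (by omega) hgn j hj, Finset.card_pair (by simp; omega),
      cng_inNbrs_of_ne_zero j (by omega), Finset.sum_singleton]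
    simp only [hj, if_neg (by omega : ¬ g - 1 + 2 ≤ g), if_pos (by omega : g - 1 - 1 + 2 ≤ g),
      show n - 1 - (g - 1) = n - g by omega, show n - 2 - (g - 1 - 1) = n - g by omega]
    push_cast
    ring
  · rw [outdeg_cng_of_ne j (by omega), cng_inNbrs_of_ne_zero j (by omega), Finset.sum_singleton]
    simp only [if_neg (by omega : ¬ j.val + 2 ≤ g), if_neg (by omega : ¬ j.val - 1 + 2 ≤ g),
      show n - 1 - (j.val - 1) = n - 1 - j.val + 1 by omega, pow_succ]
    push_cast
    ring

theorem exists_mulVec_eq_smul_cng' (hg : 2 ≤ g) (hgn : g < n) {α t : ℝ} (hα : α ≠ 1)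
    (ht : ((1 - α) * t - α) * t ^ (n - 1) = (1 - α) * (t ^ (n - g) + t ^ (g - 1))) :
    ∃ v ≠ 0, Aalpha α (Cng' n g) *ᵥ v = (α + (1 - α) * t) • v := by
  obtain ⟨c, hc⟩ : ∃ c, c = ((1 - α) * t - α) * t ^ (g - 1) - (1 - α) := ⟨_, rfl⟩
  -- geometric with ratio `t` along the cycle and along the path; the equation at `v_n` is `ht`
  refine ⟨fun i => if i.val < g then (1 - α) * t ^ i.val else c * t ^ (i.val - g), ?_, ?_⟩
  · intro h
    have h0 := congrFun h ⟨0, by omega⟩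
    simp only [Pi.zero_apply, if_pos (by omega : 0 < g), pow_zero, mul_one] at h0
    exact hα (by linarith)
  funext i
  rw [aalpha_mulVec_apply, Pi.smul_apply, smul_eq_mul]
  rcases (by omega : i.val + 2 ≤ g ∨ i.val = g - 1 ∨ (g ≤ i.val ∧ i.val + 1 < n) ∨ i.val = n - 1)
    with hi | hi | ⟨hi, hi'⟩ | hi
  · rw [outdeg, cng'_outNbrs_of_ne i (by omega) (by omega), Finset.card_singleton,
      Finset.sum_singleton]
    simp only [if_pos (by omega : i.val < g), if_pos (by omega : i.val + 1 < g), pow_succ]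
    push_cast
    ring
  · rw [outdeg, cng'_outNbrs_of_eq (by omega) hgn i hi, Finset.card_pair (by simp; omega),
      Finset.sum_pair (by simp; omega)]
    simp only [hi, if_pos (by omega : g - 1 < g), lt_irrefl, if_false, if_pos (by omega : 0 < g),
      Nat.sub_self, pow_zero]
    push_cast
    rw [hc]
    ring
  · rw [outdeg, cng'_outNbrs_of_ne i (by omega) (by omega), Finset.card_singleton,
      Finset.sum_singleton]
    simp only [if_neg (by omega : ¬ i.val < g), if_neg (by omega : ¬ i.val + 1 < g),
      Nat.sub_add_comm hi, pow_succ]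
    push_cast
    ring
  · rw [outdeg, cng'_outNbrs_last hgn i hi, Finset.card_singleton, Finset.sum_singleton]
    simp only [hi, if_neg (by omega : ¬ n - 1 < g), if_pos (by omega : g - 1 < g)]
    have hpow : t ^ (n - 1) = t ^ (g - 1) * t ^ (n - g) := by rw [← pow_add]; congr 1; omega
    have hpow' : t ^ (n - g) = t ^ (n - 1 - g) * t := by rw [← pow_succ]; congr 1; omega
    rw [hpow, hpow'] at ht
    push_cast
    rw [hc]
    linear_combination (-(1 - α)) * ht

end CycleWithPath

theorem stmt10_general {n g : ℕ} (hg : 2 ≤ g) (hgn : g ≤ n - 1)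
    (α : ℝ) (hα0 : 0 ≤ α) (hα1 : α < 1) :
    lamAlpha α (Cng n g) < lamAlpha α (Cng' n g) := by
  have hgn' : g < n := by omega
  have hβ : 0 < 1 - α := by linarith
  obtain ⟨s, hs1, hs⟩ := exists_gt_mul_pow_eq hα0 hβ (N := n - 1) (a := n - g) (b := 0)
    (by omega) (Nat.zero_le _) le_rfl (by simp; linarith)
  have hsg : s ^ 0 < s ^ (g - 1) := pow_lt_pow_right₀ hs1 (by omega)
  obtain ⟨t, hst, ht⟩ := exists_gt_mul_pow_eq hα0 hβ (N := n - 1) (a := n - g) (b := g - 1)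
    (by omega) (by omega) hs1.le (by rw [hs]; gcongr)
  obtain ⟨w, hw, hwM⟩ :=
    exists_pos_transpose_mulVec_eq_smul_cng hg hgn' hα1 (by linarith : 0 < s) (by simpa using hs)
  obtain ⟨v, hv, hvM⟩ := exists_mulVec_eq_smul_cng' hg hgn' hα1.ne ht
  have : Nonempty (Fin n) := ⟨⟨0, by omega⟩⟩
  calc lamAlpha α (Cng n g) ≤ α + (1 - α) * s :=
        specRad_le_of_transpose_mulVec_le (aalpha_nonneg _ hα0 hα1.le) hw hwM.le
    _ < α + (1 - α) * t := by gcongr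
    _ ≤ |α + (1 - α) * t| := le_abs_self _
    _ ≤ lamAlpha α (Cng' n g) := abs_le_specRad_of_mulVec_eq_smul hv hvM

/-- `λ_α(C'_{n,g}) > λ_α(C_{n,g})`. -/
theorem stmt10 {n g : ℕ} (hg : 2 ≤ g) (hgn : g ≤ n - 1) (hn : 3 ≤ n)
    (α : ℝ) (hα0 : 0 ≤ α) (hα1 : α < 1) :
    lamAlpha α (Cng n g) < lamAlpha α (Cng' n g) :=
  stmt10_general hg hgn α hα0 hα1
end
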